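/- If a pure d-dimensional simplicial complex Δ is vertex decomposable, then its pure k-skeleton Δ^[k] is vertex decomposable for every 0 ≤ k < d. -/

import Mathlib

/-- A simplicial complex: a collection of finite sets closed under taking subsets. -/
def IsComplex {α : Type*} (Δ : Set (Finset α)) : Prop :=
  ∀ F ∈ Δ, ∀ G : Finset α, G ⊆ F → G ∈ Δ

/-- A facet: a maximal face of `Δ`. -/
def IsFacet {α : Type*} (Δ : Set (Finset α)) (F : Finset α) : Prop :=
  F ∈ Δ ∧ ∀ G ∈ Δ, F ⊆ G → G = F

/-- The initial dimension `mdim Δ`: the minimum dimension (= card − 1) of a facet of `Δ`. -/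
noncomputable def mdim {α : Type*} (Δ : Set (Finset α)) : ℤ :=
  ((sInf {n : ℕ | ∃ F, IsFacet Δ F ∧ F.card = n} : ℕ) : ℤ) - 1

/-- The dimension `dimc Δ`: the maximum dimension (= card − 1) of a face of `Δ`. -/
noncomputable def dimc {α : Type*} (Δ : Set (Finset α)) : ℤ :=
  ((sSup {n : ℕ | ∃ F ∈ Δ, F.card = n} : ℕ) : ℤ) - 1

/-- A complex is pure if its initial dimension equals its dimension. -/
def IsPure {α : Type*} (Δ : Set (Finset α)) : Prop := mdim Δ = dimc Δ

/-- Deletion of a vertex: `del_Δ(x) = {F ∈ Δ : x ∉ F}`. -/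
def del {α : Type*} (Δ : Set (Finset α)) (x : α) : Set (Finset α) :=
  {F ∈ Δ | x ∉ F}

/-- Link of a vertex: `link_Δ(x) = {F \ {x} : x ∈ F ∈ Δ}`. -/
def link {α : Type*} [DecidableEq α] (Δ : Set (Finset α)) (x : α) : Set (Finset α) :=
  {G | ∃ F ∈ Δ, x ∈ F ∧ G = F \ {x}}

/-- A shedding vertex: every facet containing `x` is covered by a facet avoiding `x`. -/
def IsShedding {α : Type*} [DecidableEq α] (Δ : Set (Finset α)) (x : α) : Prop :=
  ∀ F, IsFacet Δ F → x ∈ F → ∃ F', IsFacet Δ F' ∧ x ∉ F' ∧ F \ {x} ⊆ F'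

/-- A dismissing vertex: `mdim del_Δ(x) ≥ mdim Δ`. -/
def IsDismissing {α : Type*} (Δ : Set (Finset α)) (x : α) : Prop :=
  mdim Δ ≤ mdim (del Δ x)

/-- A simplex: the collection of all subsets of a finite set (possibly empty). -/
def IsSimplexSet {α : Type*} (Δ : Set (Finset α)) : Prop :=
  ∃ F : Finset α, Δ = {G : Finset α | G ⊆ F}

/-- The pure `k`-skeleton: all faces contained in some `k`-dimensional face of `Δ`. -/
def pureSkeleton {α : Type*} (Δ : Set (Finset α)) (k : ℤ) : Set (Finset α) :=
  {F | ∃ G ∈ Δ, F ⊆ G ∧ (G.card : ℤ) = k + 1}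

/-- Vertex decomposable complexes. -/
inductive VertexDecomposable {α : Type*} [DecidableEq α] : Set (Finset α) → Prop
  | simplex {Δ : Set (Finset α)} : IsSimplexSet Δ → VertexDecomposable Δ
  | shed {Δ : Set (Finset α)} (x : α) : IsShedding Δ x →
      VertexDecomposable (del Δ x) → VertexDecomposable (link Δ x) →
      VertexDecomposable Δ

/-- Vertex dismissible complexes. -/
inductive VertexDismissible {α : Type*} [DecidableEq α] : Set (Finset α) → Prop
  | simplex {Δ : Set (Finset α)} : IsSimplexSet Δ → VertexDismissible Δ
  | dismiss {Δ : Set (Finset α)} (x : α) : IsDismissing Δ x →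
      VertexDismissible (del Δ x) → VertexDismissible (link Δ x) →
      VertexDismissible Δ

/-- `⟨F⟩`: the simplex on the finite set `F`. -/
def faceSimplex {α : Type*} (F : Finset α) : Set (Finset α) := {G : Finset α | G ⊆ F}

/-- A shelling order: an ordering `F_0, …, F_{q-1}` of the facets of `Δ` such that for `j ≥ 1`
the complex `⟨F_j⟩ ∩ ⋃_{i<j} ⟨F_i⟩` is pure of dimension `dim F_j − 1`. -/
def IsShellingOrder {α : Type*} (Δ : Set (Finset α)) {q : ℕ} (F : Fin q → Finset α) : Prop :=
  Function.Injective F ∧ (∀ G, IsFacet Δ G ↔ ∃ i, F i = G) ∧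
  ∀ j : Fin q, 0 < (j : ℕ) → ∀ G,
    IsFacet (faceSimplex (F j) ∩ ⋃ (i : Fin q) (_ : i < j), faceSimplex (F i)) G →
    (G.card : ℤ) = (F j).card - 1

/-- A complex is shellable if its facets admit a shelling order. -/
def Shellable {α : Type*} (Δ : Set (Finset α)) : Prop :=
  ∃ (q : ℕ) (F : Fin q → Finset α), IsShellingOrder Δ F

/-- A scaling order: an ordering `F_0, …, F_{q-1}` of the facets of `Δ` such that for `j ≥ 1`
the complex `Δ_j = ⟨F_j⟩ ∩ ⋃_{i<j} ⟨F_i⟩` satisfies `mdim Δ_j ≥ mdim Δ − 1`. -/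
def IsScalingOrder {α : Type*} (Δ : Set (Finset α)) {q : ℕ} (F : Fin q → Finset α) : Prop :=
  Function.Injective F ∧ (∀ G, IsFacet Δ G ↔ ∃ i, F i = G) ∧
  ∀ j : Fin q, 0 < (j : ℕ) →
    mdim Δ - 1 ≤ mdim (faceSimplex (F j) ∩ ⋃ (i : Fin q) (_ : i < j), faceSimplex (F i))

/-- A complex is scalable if its facets admit a scaling order. -/
def Scalable {α : Type*} (Δ : Set (Finset α)) : Prop :=
  ∃ (q : ℕ) (F : Fin q → Finset α), IsScalingOrder Δ F

section Aux

variable {α : Type*} [DecidableEq α]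

lemma vd_empty_mem {Δ : Set (Finset α)} (hvd : VertexDecomposable Δ) : ∅ ∈ Δ := by
  induction hvd with
  | simplex h => obtain ⟨F, rfl⟩ := h; exact Finset.empty_subset F
  | shed x hsh hdel hlink ihdel ihlink => exact ihdel.1

lemma exists_facet {Δ : Set (Finset α)} (hfin : Δ.Finite) {F : Finset α} (hF : F ∈ Δ) :
    ∃ H, IsFacet Δ H ∧ F ⊆ H := by
  obtain ⟨H, hH, hmax⟩ := Set.Finite.exists_maximalFor Finset.card {G ∈ Δ | F ⊆ G}
    (hfin.subset (fun G hG => hG.1)) ⟨F, hF, subset_rfl⟩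
  refine ⟨H, ⟨hH.1, fun G hG hHG => ?_⟩, hH.2⟩
  exact (Finset.eq_of_subset_of_card_le hHG
    (hmax ⟨hG, hH.2.trans hHG⟩ (Finset.card_le_card hHG))).symm

/-- The m-skeleton of a simplex is vertex decomposable. -/
lemma simplexSkel : ∀ (n : ℕ) (F : Finset α), F.card = n → ∀ m : ℕ,
    VertexDecomposable {G : Finset α | G ⊆ F ∧ G.card ≤ m} := by
  intro n
  induction n using Nat.strong_induction_on with
  | _ n ih =>
    intro F hFn m
    match m with
    | 0 =>
      apply VertexDecomposable.simplex
      refine ⟨∅, ?_⟩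
      ext G
      simp only [Set.mem_setOf_eq, Nat.le_zero, Finset.card_eq_zero, Finset.subset_empty]
      constructor
      · rintro ⟨-, rfl⟩; rfl
      · rintro rfl; exact ⟨Finset.empty_subset F, rfl⟩
    | m + 1 =>
      rcases Nat.lt_or_ge n (m + 2) with hn | hn
      · -- F.card ≤ m + 1 : the whole simplex
        apply VertexDecomposable.simplex
        refine ⟨F, ?_⟩
        ext G
        simp only [Set.mem_setOf_eq]
        exact ⟨fun h => h.1, fun h => ⟨h, le_trans (Finset.card_le_card h) (by omega)⟩⟩
      · -- m + 1 < F.card : shed a vertex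
        have hFne : F.Nonempty := Finset.card_pos.mp (by omega)
        obtain ⟨x, hx⟩ := hFne
        set S : Set (Finset α) := {G : Finset α | G ⊆ F ∧ G.card ≤ m + 1} with hS
        have hcardex : F.card = n := hFn
        have herase : (F.erase x).card = n - 1 := by
          rw [Finset.card_erase_of_mem hx, hFn]
        have hdel_eq : del S x = {G : Finset α | G ⊆ F.erase x ∧ G.card ≤ m + 1} := by
          ext G
          simp only [del, hS, Set.mem_setOf_eq, Set.mem_sep_iff]
          constructor
          · rintro ⟨⟨h1, h2⟩, h3⟩
            exact ⟨fun a ha => Finset.mem_erase.mpr ⟨fun h => h3 (h ▸ ha), h1 ha⟩, h2⟩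
          · rintro ⟨h1, h2⟩
            exact ⟨⟨h1.trans (Finset.erase_subset x F), h2⟩,
              fun hxG => (Finset.mem_erase.mp (h1 hxG)).1 rfl⟩
        have hlink_eq : link S x = {G : Finset α | G ⊆ F.erase x ∧ G.card ≤ m} := by
          ext G
          simp only [link, hS, Set.mem_setOf_eq]
          constructor
          · rintro ⟨H, ⟨hHF, hHc⟩, hxH, rfl⟩
            constructor
            · intro a ha
              rw [Finset.mem_sdiff, Finset.mem_singleton] at ha
              exact Finset.mem_erase.mpr ⟨ha.2, hHF ha.1⟩
            · have : (H \ {x}).card = H.card - 1 := by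
                rw [Finset.sdiff_singleton_eq_erase, Finset.card_erase_of_mem hxH]
              omega
          · rintro ⟨h1, h2⟩
            refine ⟨insert x G, ⟨?_, ?_⟩, Finset.mem_insert_self x G, ?_⟩
            · exact Finset.insert_subset hx (h1.trans (Finset.erase_subset x F))
            · have := Finset.card_insert_le x G; omega
            · have hxG : x ∉ G := fun h => (Finset.mem_erase.mp (h1 h)).1 rfl
              rw [Finset.sdiff_singleton_eq_erase, Finset.erase_insert hxG]
        have hshed : IsShedding S x := by
          intro G hG hxG
          have hGS : G ⊆ F ∧ G.card ≤ m + 1 := hG.1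
          have h1 : (G \ {x}).card ≤ m + 1 := by
            refine le_trans (Finset.card_le_card ?_) hGS.2
            exact Finset.sdiff_subset
          obtain ⟨H, hH1, hH2, hH3⟩ := Finset.exists_subsuperset_card_eq
            (show G \ {x} ⊆ F.erase x by
              intro a ha
              rw [Finset.mem_sdiff, Finset.mem_singleton] at ha
              exact Finset.mem_erase.mpr ⟨ha.2, hGS.1 ha.1⟩)
            (show (G \ {x}).card ≤ m + 1 from h1)
            (show m + 1 ≤ (F.erase x).card by rw [Finset.card_erase_of_mem hx]; omega)
          refine ⟨H, ⟨⟨hH2.trans (Finset.erase_subset x F), le_of_eq hH3⟩, ?_⟩, ?_, hH1⟩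
          · intro K hK hHK
            exact (Finset.eq_of_subset_of_card_le hHK (by rw [hH3]; exact hK.2)).symm
          · exact fun h => (Finset.mem_erase.mp (hH2 h)).1 rfl
        refine VertexDecomposable.shed x hshed ?_ ?_
        · rw [hdel_eq]
          exact ih (n - 1) (by omega) (F.erase x) herase (m + 1)
        · rw [hlink_eq]
          exact ih (n - 1) (by omega) (F.erase x) herase m

lemma del_isComplex {Δ : Set (Finset α)} (hΔ : IsComplex Δ) (x : α) :
    IsComplex (del Δ x) := by
  rintro F ⟨hF, hxF⟩ G hGF
  exact ⟨hΔ F hF G hGF, fun h => hxF (hGF h)⟩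

lemma link_isComplex {Δ : Set (Finset α)} (hΔ : IsComplex Δ) (x : α) :
    IsComplex (link Δ x) := by
  rintro F ⟨H, hH, hxH, rfl⟩ G hGF
  refine ⟨insert x G, hΔ H hH _ ?_, Finset.mem_insert_self x G, ?_⟩
  · refine Finset.insert_subset hxH (fun a ha => ?_)
    have := hGF ha
    rw [Finset.mem_sdiff] at this
    exact this.1
  · have hxG : x ∉ G := fun h => by
      have := hGF h; rw [Finset.mem_sdiff, Finset.mem_singleton] at this; exact this.2 rfl
    rw [Finset.sdiff_singleton_eq_erase, Finset.erase_insert hxG]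

lemma del_finite {Δ : Set (Finset α)} (hfin : Δ.Finite) (x : α) : (del Δ x).Finite :=
  hfin.subset (fun F hF => hF.1)

lemma link_finite {Δ : Set (Finset α)} (hfin : Δ.Finite) (x : α) : (link Δ x).Finite := by
  have : link Δ x ⊆ (fun F => F \ {x}) '' Δ := by
    rintro G ⟨H, hH, -, rfl⟩; exact ⟨H, hH, rfl⟩
  exact (hfin.image _).subset this

/-- The m-skeleton of a vertex decomposable finite complex is vertex decomposable. -/
lemma skel_vd {Δ : Set (Finset α)} (hvd : VertexDecomposable Δ) :
    IsComplex Δ → Δ.Finite → ∀ m : ℕ, VertexDecomposable {F ∈ Δ | F.card ≤ m} := by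
  induction hvd with
  | simplex h =>
    intro _ _ m
    obtain ⟨F, rfl⟩ := h
    exact simplexSkel F.card F rfl m
  | @shed Δ x hsh hdel hlink ihdel ihlink =>
    intro hc hfin m
    match m with
    | 0 =>
      apply VertexDecomposable.simplex
      refine ⟨∅, ?_⟩
      ext G
      simp only [Set.mem_sep_iff, Nat.le_zero, Finset.card_eq_zero, Set.mem_setOf_eq,
        Finset.subset_empty]
      constructor
      · rintro ⟨-, rfl⟩; rfl
      · rintro rfl; exact ⟨(vd_empty_mem hdel).1, rfl⟩
    | m + 1 =>
      set S : Set (Finset α) := {F ∈ Δ | F.card ≤ m + 1} with hSdef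
      have hdel_eq : del S x = {F ∈ del Δ x | F.card ≤ m + 1} := by
        ext G
        simp only [del, hSdef, Set.mem_sep_iff, Set.mem_setOf_eq]
        tauto
      have hlink_eq : link S x = {F ∈ link Δ x | F.card ≤ m} := by
        ext G
        simp only [link, hSdef, Set.mem_sep_iff, Set.mem_setOf_eq]
        constructor
        · rintro ⟨H, ⟨hH, hHc⟩, hxH, rfl⟩
          refine ⟨⟨H, hH, hxH, rfl⟩, ?_⟩
          have : (H \ {x}).card = H.card - 1 := by
            rw [Finset.sdiff_singleton_eq_erase, Finset.card_erase_of_mem hxH]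
          omega
        · rintro ⟨⟨H, hH, hxH, rfl⟩, h2⟩
          refine ⟨H, ⟨hH, ?_⟩, hxH, rfl⟩
          have : (H \ {x}).card = H.card - 1 := by
            rw [Finset.sdiff_singleton_eq_erase, Finset.card_erase_of_mem hxH]
          omega
      have hshed : IsShedding S x := by
        intro G hG hxG
        obtain ⟨hGΔ, hGc⟩ : G ∈ Δ ∧ G.card ≤ m + 1 := hG.1
        obtain ⟨H, hHfacet, hGH⟩ := exists_facet hfin hGΔ
        have hxH : x ∈ H := hGH hxG
        obtain ⟨F', hF'facet, hxF', hsub⟩ := hsh H hHfacet hxH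
        have hGxF' : G \ {x} ⊆ F' := fun a ha => by
          rw [Finset.mem_sdiff, Finset.mem_singleton] at ha
          exact hsub (Finset.mem_sdiff.mpr ⟨hGH ha.1, by simpa using ha.2⟩)
        rcases Nat.lt_or_ge (m + 1) F'.card with hc' | hc'
        · -- shrink F' to a card-(m+1) facet of S
          obtain ⟨K, hK1, hK2, hK3⟩ := Finset.exists_subsuperset_card_eq hGxF'
            (le_trans (Finset.card_le_card Finset.sdiff_subset) hGc) (le_of_lt hc')
          refine ⟨K, ⟨⟨hc F' hF'facet.1 K hK2, le_of_eq hK3⟩, ?_⟩, fun h => hxF' (hK2 h), hK1⟩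
          intro L hL hKL
          exact (Finset.eq_of_subset_of_card_le hKL (by rw [hK3]; exact hL.2)).symm
        · -- F' itself is a facet of S
          refine ⟨F', ⟨⟨hF'facet.1, hc'⟩, ?_⟩, hxF', hGxF'⟩
          intro L hL hFL
          exact hF'facet.2 L hL.1 hFL
      refine VertexDecomposable.shed x hshed ?_ ?_
      · rw [hdel_eq]
        exact ihdel (del_isComplex hc x) (del_finite hfin x) (m + 1)
      · rw [hlink_eq]
        exact ihlink (link_isComplex hc x) (link_finite hfin x) m

end Aux

theorem pure_vertexDecomposable_skeleton {α : Type*} [DecidableEq α]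
    (Δ : Set (Finset α)) (hΔ : IsComplex Δ) (hfin : Δ.Finite)
    (d : ℤ) (hpure : IsPure Δ) (hd : dimc Δ = d) (hvd : VertexDecomposable Δ)
    (k : ℤ) (hk0 : 0 ≤ k) (hkd : k < d) :
    VertexDecomposable (pureSkeleton Δ k) := by
  set m : ℕ := k.toNat + 1 with hm
  have hmk : (m : ℤ) = k + 1 := by simp [hm]; omega
  have hmdim : ((sInf {n : ℕ | ∃ F, IsFacet Δ F ∧ F.card = n} : ℕ) : ℤ) = d + 1 := by
    have := hpure
    rw [IsPure, hd] at this
    rw [mdim] at this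
    omega
  have hfacet_card : ∀ H, IsFacet Δ H → m ≤ H.card := by
    intro H hH
    have h1 : sInf {n : ℕ | ∃ F, IsFacet Δ F ∧ F.card = n} ≤ H.card :=
      Nat.sInf_le ⟨H, hH, rfl⟩
    have : (m : ℤ) ≤ (H.card : ℤ) := by
      calc (m : ℤ) = k + 1 := hmk
        _ ≤ d + 1 := by omega
        _ = ((sInf {n : ℕ | ∃ F, IsFacet Δ F ∧ F.card = n} : ℕ) : ℤ) := hmdim.symm
        _ ≤ (H.card : ℤ) := by exact_mod_cast h1
    exact_mod_cast this
  have heq : pureSkeleton Δ k = {F ∈ Δ | F.card ≤ m} := by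
    ext F
    simp only [pureSkeleton, Set.mem_setOf_eq, Set.mem_sep_iff]
    constructor
    · rintro ⟨G, hG, hFG, hGc⟩
      refine ⟨hΔ G hG F hFG, ?_⟩
      have : (F.card : ℤ) ≤ (G.card : ℤ) := by exact_mod_cast Finset.card_le_card hFG
      omega
    · rintro ⟨hF, hFc⟩
      obtain ⟨H, hHfacet, hFH⟩ := exists_facet hfin hF
      obtain ⟨G, hG1, hG2, hG3⟩ := Finset.exists_subsuperset_card_eq hFH hFc
        (hfacet_card H hHfacet)
      exact ⟨G, hΔ H hHfacet.1 G hG2, hG1, by rw [hG3]; omega⟩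
  rw [heq]
  exact skel_vd hvd hΔ hfin m
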